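/- Let β be a Pisot unit with minimal polynomial g(x) = x^m − k₁x^{m−1} − ⋯ − k_m, and let R_β be the additive group of sequences T : ℕ → ℤ that eventually satisfy the recurrence T(n+m) = k₁T(n+m−1) + ⋯ + k_m T(n). The map Φ sending T ∈ R_β to lim_{n→∞} β^{−n}T(n) is a well-defined additive group homomorphism from R_β onto P_β (surjective), and its kernel is exactly the set of sequences T ∈ R_β that are eventually zero. Consequently P_β is isomorphic to the quotient of R_β by the subgroup of eventually-zero sequences. -/

import Mathlib

/-!
An integer sequence `T ∈ R_β` eventually satisfies the linear recurrence whose characteristic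
polynomial is the minimal polynomial `g` of `β`. The roots `β = γ₁, γ₂, …, γₘ` of `g` are distinct,
so a Vandermonde argument writes `T (n + j) = ∑ cᵢ γᵢⁿ`; as `|γᵢ| < 1` for `i ≥ 2`, this gives a
real `ξ` with `T n - ξ βⁿ → 0`, and `ξ = lim T n / βⁿ`. Such a `ξ` lies in `P_β`. Conversely, for
`ξ ∈ P_β` the rounded sequence `n ↦ round (ξ βⁿ)` has an integer recurrence residual tending to
`0`, because `ξ βⁿ` satisfies the recurrence exactly; so the residual vanishes eventually and the
rounded sequence lies in `R_β`. The same rigidity of integers identifies the kernel: `ξ = 0` forces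
`T n → 0`, i.e. `T` is eventually `0`. The isomorphism is then the first isomorphism theorem.
-/

open Filter Polynomial

/-- Distance from a real number to the nearest integer. -/
noncomputable def nearestIntDist (y : ℝ) : ℝ := |y - (round y : ℤ)|

/-- `P_β = {ξ ∈ ℝ : ‖ξ βⁿ‖ → 0 as n → +∞}`. -/
def PisotSet (β : ℝ) : Set ℝ :=
  {ξ : ℝ | Filter.Tendsto (fun n : ℕ => nearestIntDist (ξ * β ^ n)) Filter.atTop (nhds 0)}

/-- `β` is a Pisot unit. -/
def IsPisotUnit (β : ℝ) : Prop :=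
  1 < β ∧ IsIntegral ℤ β ∧
    (∀ z : ℂ, ((minpoly ℤ β).map (Int.castRingHom ℂ)).IsRoot z → z ≠ (β : ℂ) →
      ‖z‖ < 1) ∧
    ((minpoly ℤ β).coeff 0 = 1 ∨ (minpoly ℤ β).coeff 0 = -1)

/-- `R_β`: integer sequences that eventually satisfy the linear recurrence of the
minimal polynomial `g(x) = x^m - k₁x^{m-1} - ⋯ - k_m` of `β` (here `k_{m-i} = -g.coeff i`). -/
def RecSet (β : ℝ) : Set (ℕ → ℤ) :=
  {T : ℕ → ℤ | ∃ j : ℕ, ∀ n ≥ j, T (n + (minpoly ℤ β).natDegree) =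
    -∑ i ∈ Finset.range (minpoly ℤ β).natDegree, (minpoly ℤ β).coeff i * T (n + i)}

open Topology

theorem Polynomial.Monic.pow_natDegree_eq_neg_sum {R A : Type*} [CommRing R] [CommRing A]
    [Algebra R A] {q : R[X]} (hq : q.Monic) {x : A} (hx : aeval x q = 0) :
    x ^ q.natDegree = -∑ i ∈ Finset.range q.natDegree, algebraMap R A (q.coeff i) * x ^ i := by
  rw [hq.as_sum] at hx
  simpa [eq_neg_iff_add_eq_zero, Algebra.smul_def] using hx

def Polynomial.toLinearRecurrence {R : Type*} (A : Type*) [CommRing R] [CommRing A]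
    [Algebra R A] (q : R[X]) : LinearRecurrence A :=
  ⟨q.natDegree, fun i => -algebraMap R A (q.coeff i)⟩

theorem Polynomial.Monic.isSolution_toLinearRecurrence_pow {R A : Type*} [CommRing R]
    [CommRing A] [Algebra R A] {q : R[X]} (hq : q.Monic) {x : A} (hx : aeval x q = 0) :
    (q.toLinearRecurrence A).IsSolution fun n => x ^ n := by
  intro n
  simp only [toLinearRecurrence, pow_add, hq.pow_natDegree_eq_neg_sum hx, Finset.mul_sum,
    Finset.sum_range fun i => algebraMap R A (q.coeff i) * x ^ i, ← Finset.sum_neg_distrib]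
  exact Finset.sum_congr rfl fun i _ => by ring

theorem Polynomial.isSolution_toLinearRecurrence_shift {q : ℤ[X]} {T : ℕ → ℤ} {j : ℕ}
    (hT : ∀ n ≥ j, T (n + q.natDegree) = -∑ i ∈ Finset.range q.natDegree, q.coeff i * T (n + i))
    (A : Type*) [CommRing A] : (q.toLinearRecurrence A).IsSolution fun n => (T (n + j) : A) := by
  intro n
  have hn := congrArg (Int.cast : ℤ → A) (hT (n + j) (Nat.le_add_left j n))
  simp only [Int.cast_neg, Int.cast_sum, Int.cast_mul, Finset.sum_range] at hn
  simp only [toLinearRecurrence, add_right_comm n _ j, hn, algebraMap_int_eq, eq_intCast,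
    ← Finset.sum_neg_distrib, neg_mul]
  rfl

theorem LinearRecurrence.exists_eq_sum_geom {K : Type*} [Field K] (E : LinearRecurrence K)
    {γ : Fin E.order → K} (hγ : Function.Injective γ)
    (hgeom : ∀ i, E.IsSolution fun n => γ i ^ n) {u : ℕ → K} (hu : E.IsSolution u) :
    ∃ c : Fin E.order → K, u = fun n => ∑ i, c i * γ i ^ n := by
  have hV : IsUnit (Matrix.vandermonde γ) :=
    (Matrix.isUnit_iff_isUnit_det _).mpr (Matrix.det_vandermonde_ne_zero_iff.mpr hγ).isUnit
  obtain ⟨c, hc⟩ := Matrix.vecMul_surjective_iff_isUnit.mpr hV fun k => u k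
  refine ⟨c, (E.eq_iff_eqOn_range_order _ _ hu ?_).mpr fun n hn => ?_⟩
  · have hsum := E.solSpace.sum_mem (t := Finset.univ) fun i _ =>
      E.solSpace.smul_mem (c i) (hgeom i)
    rw [E.is_sol_iff_mem_solSpace]
    convert hsum using 1
    ext n
    simp [Finset.sum_apply]
  · simpa [Matrix.vecMul, dotProduct] using (congrFun hc ⟨n, Finset.mem_range.mp hn⟩).symm

theorem tendsto_sum_mul_pow_sub_dominant {𝕜 ι : Type*} [NormedField 𝕜] [Fintype ι]
    [DecidableEq ι] {γ : ι → 𝕜} {i₀ : ι} (hγ : ∀ i ≠ i₀, ‖γ i‖ < 1) (c : ι → 𝕜) :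
    Tendsto (fun n : ℕ => ∑ i, c i * γ i ^ n - c i₀ * γ i₀ ^ n) atTop (𝓝 0) := by
  have h := tendsto_finsetSum (Finset.univ.erase i₀) fun i hi =>
    (tendsto_pow_atTop_nhds_zero_of_norm_lt_one (hγ i (Finset.ne_of_mem_erase hi))).const_mul (c i)
  simp only [mul_zero, Finset.sum_const_zero] at h
  refine h.congr fun n => ?_
  rw [← Finset.add_sum_erase _ _ (Finset.mem_univ i₀), add_sub_cancel_left]

theorem tendsto_div_pow_of_tendsto_sub_mul_pow {𝕜 : Type*} [NormedField 𝕜] {β ξ : 𝕜}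
    (hβ : 1 < ‖β‖) {u : ℕ → 𝕜} (h : Tendsto (fun n => u n - ξ * β ^ n) atTop (𝓝 0)) :
    Tendsto (fun n => u n / β ^ n) atTop (𝓝 ξ) := by
  have hβ₀ : β ≠ 0 := norm_pos_iff.mp (one_pos.trans hβ)
  have hinv : Tendsto (fun n : ℕ => β⁻¹ ^ n) atTop (𝓝 0) :=
    tendsto_pow_atTop_nhds_zero_of_norm_lt_one (by rw [norm_inv]; exact inv_lt_one_of_one_lt₀ hβ)
  have hlim := (h.mul hinv).const_add ξ
  rw [zero_mul, add_zero] at hlim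
  refine hlim.congr fun n => ?_
  rw [inv_pow, sub_mul, mul_assoc, mul_inv_cancel₀ (pow_ne_zero n hβ₀), div_eq_mul_inv]
  ring

theorem eq_of_tendsto_sub_mul_pow {𝕜 : Type*} [NormedField 𝕜] {β ξ₁ ξ₂ : 𝕜} (hβ : 1 < ‖β‖)
    {u : ℕ → 𝕜} (h₁ : Tendsto (fun n => u n - ξ₁ * β ^ n) atTop (𝓝 0))
    (h₂ : Tendsto (fun n => u n - ξ₂ * β ^ n) atTop (𝓝 0)) : ξ₁ = ξ₂ :=
  tendsto_nhds_unique (tendsto_div_pow_of_tendsto_sub_mul_pow hβ h₁)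
    (tendsto_div_pow_of_tendsto_sub_mul_pow hβ h₂)

theorem eventually_eq_zero_of_tendsto_intCast {α : Type*} {l : Filter α} {u : α → ℤ}
    (h : Tendsto (fun a => (u a : ℝ)) l (𝓝 0)) : ∀ᶠ a in l, u a = 0 := by
  have hu : Tendsto u l (𝓝 0) :=
    Int.isClosedEmbedding_coe_real.isEmbedding.tendsto_nhds_iff.mpr
      (by simpa [Function.comp_def] using h)
  simpa [nhds_discrete, tendsto_pure] using hu

theorem eq_zero_iff_eventually_eq_zero_of_tendsto_sub_mul_pow {β ξ : ℝ} (hβ : 1 < ‖β‖)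
    {T : ℕ → ℤ} (hT : Tendsto (fun n => (T n : ℝ) - ξ * β ^ n) atTop (𝓝 0)) :
    ξ = 0 ↔ ∀ᶠ n in atTop, T n = 0 := by
  refine ⟨fun hξ => eventually_eq_zero_of_tendsto_intCast (by simpa [hξ] using hT),
    fun h => eq_of_tendsto_sub_mul_pow hβ hT ?_⟩
  exact tendsto_const_nhds.congr' (h.mono fun n hn => by simp [hn])

theorem Polynomial.Monic.eventually_recurrence_of_tendsto_sub_mul_pow {q : ℤ[X]} (hq : q.Monic)
    {β ξ : ℝ} (hβ : aeval β q = 0) {T : ℕ → ℤ}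
    (hT : Tendsto (fun n => (T n : ℝ) - ξ * β ^ n) atTop (𝓝 0)) :
    ∀ᶠ n in atTop,
      T (n + q.natDegree) = -∑ i ∈ Finset.range q.natDegree, q.coeff i * T (n + i) := by
  have hβq := hq.pow_natDegree_eq_neg_sum hβ
  simp only [algebraMap_int_eq, eq_intCast] at hβq
  have hgeom (n : ℕ) : ξ * β ^ (n + q.natDegree)
      + ∑ i ∈ Finset.range q.natDegree, (q.coeff i : ℝ) * (ξ * β ^ (n + i)) = 0 := by
    simp only [pow_add, hβq, mul_neg, Finset.mul_sum, ← Finset.sum_neg_distrib,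
      ← Finset.sum_add_distrib]
    exact Finset.sum_eq_zero fun i _ => by ring
  set D := fun n => (T n : ℝ) - ξ * β ^ n
  -- `ξ * β ^ n` satisfies the recurrence exactly, so the integer residual of `T` is that of `D`
  have hres (n : ℕ) :
      ((T (n + q.natDegree) + ∑ i ∈ Finset.range q.natDegree, q.coeff i * T (n + i) : ℤ) : ℝ)
        = D (n + q.natDegree) + ∑ i ∈ Finset.range q.natDegree, (q.coeff i : ℝ) * D (n + i) := by
    push_cast
    simp only [D, mul_sub, Finset.sum_sub_distrib]
    linear_combination hgeom n
  have hlim : Tendsto (fun n => D (n + q.natDegree)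
      + ∑ i ∈ Finset.range q.natDegree, (q.coeff i : ℝ) * D (n + i)) atTop (𝓝 0) := by
    simpa using (hT.comp (tendsto_add_atTop_nat _)).add (tendsto_finsetSum _ fun i _ =>
      (hT.comp (tendsto_add_atTop_nat i)).const_mul (q.coeff i : ℝ))
  filter_upwards [eventually_eq_zero_of_tendsto_intCast (hlim.congr fun n => (hres n).symm)]
    with n hn
  exact eq_neg_of_add_eq_zero_left hn

theorem mem_recSet_of_tendsto_sub_mul_pow {β ξ : ℝ} (hβ : IsIntegral ℤ β) {T : ℕ → ℤ}
    (hT : Tendsto (fun n => (T n : ℝ) - ξ * β ^ n) atTop (𝓝 0)) : T ∈ RecSet β :=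
  eventually_atTop.mp <|
    (minpoly.monic hβ).eventually_recurrence_of_tendsto_sub_mul_pow (minpoly.aeval ℤ β) hT

theorem mem_pisotSet_iff {β ξ : ℝ} :
    ξ ∈ PisotSet β ↔ ∃ T : ℕ → ℤ, Tendsto (fun n => (T n : ℝ) - ξ * β ^ n) atTop (𝓝 0) := by
  refine ⟨fun h => ⟨fun n => round (ξ * β ^ n), ?_⟩, fun ⟨T, hT⟩ => ?_⟩
  · rw [tendsto_zero_iff_abs_tendsto_zero]
    simp only [Function.comp_def, abs_sub_comm]
    exact h
  · refine squeeze_zero (fun n => abs_nonneg _) (fun n => round_le _ (T n)) ?_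
    simpa only [abs_sub_comm, abs_zero] using hT.abs

theorem exists_injective_roots_minpoly {β : ℝ} (hβ : IsIntegral ℤ β) :
    ∃ γ : Fin (minpoly ℤ β).natDegree → ℂ, Function.Injective γ ∧
      (∀ i, aeval (γ i) (minpoly ℤ β) = 0) ∧ (β : ℂ) ∈ Set.range γ := by
  have hQ : minpoly ℚ β = (minpoly ℤ β).map (algebraMap ℤ ℚ) :=
    minpoly.isIntegrallyClosed_eq_field_fractions' ℚ hβ
  have hcard : Fintype.card ((minpoly ℚ β).rootSet ℂ) = (minpoly ℤ β).natDegree := by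
    rw [card_rootSet_eq_natDegree (minpoly.irreducible hβ.tower_top).separable
      (IsAlgClosed.splits _), hQ, (minpoly.monic hβ).natDegree_map]
  have hroot : ∀ z ∈ (minpoly ℚ β).rootSet ℂ, aeval z (minpoly ℤ β) = 0 := fun z hz => by
    rw [mem_rootSet, hQ, aeval_map_algebraMap] at hz
    exact hz.2
  have hβroot : (β : ℂ) ∈ (minpoly ℚ β).rootSet ℂ := mem_rootSet.mpr
    ⟨minpoly.ne_zero hβ.tower_top, by rw [← Complex.coe_algebraMap, aeval_algebraMap_apply,
      minpoly.aeval, map_zero]⟩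
  let e := (Fintype.equivFinOfCardEq hcard).symm
  exact ⟨fun i => e i, Subtype.val_injective.comp e.injective, fun i => hroot _ (e i).2,
    e.symm ⟨β, hβroot⟩, by simp⟩

theorem exists_tendsto_sub_mul_pow_of_mem_recSet {β : ℝ} (hβ₀ : β ≠ 0) (hβ : IsIntegral ℤ β)
    (hconj : ∀ z : ℂ, ((minpoly ℤ β).map (Int.castRingHom ℂ)).IsRoot z → z ≠ β → ‖z‖ < 1)
    {T : ℕ → ℤ} (hT : T ∈ RecSet β) :
    ∃ ξ : ℝ, Tendsto (fun n => (T n : ℝ) - ξ * β ^ n) atTop (𝓝 0) := by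
  obtain ⟨γ, hγ, hroot, i₀, hi₀⟩ := exists_injective_roots_minpoly hβ
  obtain ⟨j, hj⟩ := hT
  obtain ⟨c, hc⟩ : ∃ c : Fin (minpoly ℤ β).natDegree → ℂ,
      (fun n => (T (n + j) : ℂ)) = fun n => ∑ i, c i * γ i ^ n :=
    LinearRecurrence.exists_eq_sum_geom _ hγ
      (fun i => (minpoly.monic hβ).isSolution_toLinearRecurrence_pow (hroot i))
      (isSolution_toLinearRecurrence_shift hj ℂ)
  have hsmall : ∀ i ≠ i₀, ‖γ i‖ < 1 := fun i hi =>
    hconj _ (by rw [IsRoot.def, eval_map, ← algebraMap_int_eq, ← aeval_def, hroot i])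
      (hi₀ ▸ hγ.ne hi)
  have hre := (Complex.continuous_re.tendsto 0).comp (tendsto_sum_mul_pow_sub_dominant hsmall c)
  refine ⟨(c i₀).re / β ^ j, (tendsto_add_atTop_iff_nat j).mp (hre.congr fun n => ?_)⟩
  rw [Function.comp_apply, ← congrFun hc n, hi₀, ← Complex.ofReal_pow, Complex.sub_re,
    Complex.re_mul_ofReal, Complex.intCast_re, pow_add, mul_comm (β ^ n), ← mul_assoc,
    div_mul_cancel₀ _ (pow_ne_zero j hβ₀)]

theorem exists_addMonoidHom_tendsto_sub_mul_pow {β : ℝ} (hβ : 1 < ‖β‖) (R : AddSubgroup (ℕ → ℤ))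
    (h : ∀ T ∈ R, ∃ ξ : ℝ, Tendsto (fun n => (T n : ℝ) - ξ * β ^ n) atTop (𝓝 0)) :
    ∃ Φ : R →+ ℝ, ∀ T : R,
      Tendsto (fun n => ((T : ℕ → ℤ) n : ℝ) - Φ T * β ^ n) atTop (𝓝 0) := by
  choose ξ hξ using fun T : R => h T T.2
  refine ⟨AddMonoidHom.mk' ξ fun a b => eq_of_tendsto_sub_mul_pow hβ (hξ (a + b)) ?_, hξ⟩
  simpa [add_mul, add_sub_add_comm] using (hξ a).add (hξ b)

theorem AddMonoidHom.nonempty_quotient_addEquiv {G H : Type*} [AddCommGroup G] [AddGroup H]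
    (f : G →+ H) {K : AddSubgroup G} {L : AddSubgroup H} (hK : f.ker = K) (hL : f.range = L) :
    Nonempty (G ⧸ K ≃+ L) := by
  subst hK hL
  exact ⟨QuotientAddGroup.quotientKerEquivRange f⟩

/-- the map `Φ : T ↦ lim β^{-n}T(n)` is a well-defined additive group
homomorphism from `R_β` onto `P_β`, with kernel exactly the eventually-zero sequences;
consequently `P_β ≅ R_β / {eventually-zero sequences}`. -/
theorem recSet_hom_onto_pisotSet (β : ℝ) (hβ : IsPisotUnit β)
    (R : AddSubgroup (ℕ → ℤ)) (hR : (R : Set (ℕ → ℤ)) = RecSet β)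
    (P : AddSubgroup ℝ) (hP : (P : Set ℝ) = PisotSet β)
    (Z0 : AddSubgroup R)
    (hZ0 : (Z0 : Set R) = {T : R | ∃ j : ℕ, ∀ n ≥ j, (T : ℕ → ℤ) n = 0}) :
    ∃ Φ : R →+ ℝ,
      (∀ T : R, Filter.Tendsto (fun n : ℕ => (((T : ℕ → ℤ) n : ℝ)) / β ^ n)
        Filter.atTop (nhds (Φ T))) ∧
      Set.range Φ = PisotSet β ∧
      (∀ T : R, Φ T = 0 ↔ ∃ j : ℕ, ∀ n ≥ j, (T : ℕ → ℤ) n = 0) ∧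
      Nonempty ((↥R ⧸ Z0) ≃+ ↥P) := by
  obtain ⟨hβ₁, hint, hconj, -⟩ := hβ
  have hβ : 1 < ‖β‖ := hβ₁.trans_le (le_abs_self β)
  obtain ⟨Φ, hΦ⟩ := exists_addMonoidHom_tendsto_sub_mul_pow hβ R fun T hT =>
    exists_tendsto_sub_mul_pow_of_mem_recSet (zero_lt_one.trans hβ₁).ne' hint hconj (hR ▸ hT)
  have hker (T : R) : Φ T = 0 ↔ ∃ j : ℕ, ∀ n ≥ j, (T : ℕ → ℤ) n = 0 :=
    (eq_zero_iff_eventually_eq_zero_of_tendsto_sub_mul_pow hβ (hΦ T)).trans eventually_atTop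
  have hrange : Set.range Φ = PisotSet β := by
    ext ξ
    rw [mem_pisotSet_iff]
    refine ⟨fun ⟨T, hT⟩ => ⟨T, hT ▸ hΦ T⟩, fun ⟨T, hT⟩ => ?_⟩
    have hTR : T ∈ (R : Set (ℕ → ℤ)) := hR ▸ mem_recSet_of_tendsto_sub_mul_pow hint hT
    exact ⟨⟨T, hTR⟩, eq_of_tendsto_sub_mul_pow hβ (hΦ _) hT⟩
  refine ⟨Φ, fun T => tendsto_div_pow_of_tendsto_sub_mul_pow hβ (hΦ T), hrange, hker,
    Φ.nonempty_quotient_addEquiv ?_ ?_⟩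
  · ext T
    rw [AddMonoidHom.mem_ker, hker, ← SetLike.mem_coe, hZ0]
    rfl
  · exact SetLike.ext' (by rw [AddMonoidHom.coe_range, hrange, hP])
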